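/- arXiv:2208.09530 — 3 statements merged into one kernel-verified Lean document; each statement's English description precedes it below -/
import Mathlib

section
/- A truthful player has no incentive to deviate from the driver-to-station assignment prescribed by the VCG allocation: for any reassignment of its drivers to the stations it received within allocation a, its total payoff (valuation plus VCG price) is at least its payoff under the prescribed assignment. -/
open Finset

/-- A truthful player has no incentive to deviate from the driver-to-station assignment
prescribed by the VCG allocation: if `a` minimizes the social cost and `a'` is any internal
reassignment by player `i` of its drivers to its received stations (so all other players'
valuations are unchanged: `v j a' = v j a` for `j ≠ i`), then `i`'s payoff (valuation minus
the VCG price, which is unaffected by the internal reassignment) under `a'` is at least its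
payoff under the prescribed assignment `a`. -/
theorem vcg_no_internal_deviation {N A : Type*} [Fintype N] [DecidableEq N]
    [Fintype A] [Nonempty A]
    (v : N → A → ℝ) (a a' : A) (i : N)
    (hmin : ∀ b : A, ∑ j, v j a ≤ ∑ j, v j b)
    (hagree : ∀ j, j ≠ i → v j a' = v j a) :
    v i a - ((Finset.univ.inf' Finset.univ_nonempty
                fun b : A => ∑ j ∈ Finset.univ.erase i, v j b)
              - ∑ j ∈ Finset.univ.erase i, v j a)
      ≤ v i a' - ((Finset.univ.inf' Finset.univ_nonempty
                fun b : A => ∑ j ∈ Finset.univ.erase i, v j b)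
              - ∑ j ∈ Finset.univ.erase i, v j a) := by
  have h := hmin a'
  rw [← Finset.add_sum_erase _ _ (Finset.mem_univ i),
      ← Finset.add_sum_erase _ _ (Finset.mem_univ i)] at h
  have hrest : ∑ j ∈ Finset.univ.erase i, v j a' = ∑ j ∈ Finset.univ.erase i, v j a :=
    Finset.sum_congr rfl fun j hj => hagree j (Finset.ne_of_mem_erase hj)
  rw [hrest] at h
  linarith
end

section
/- In the offline VCG mechanism, a player has no incentive to misreport its drivers' locations even if after the allocation it may internally reassign its drivers to the set of stations it received: truthful reporting followed by the prescribed assignment yields a payoff no larger than any misreport followed by an optimal internal reassignment. -/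
open Finset

/-- Offline VCG: a player has no incentive to misreport even when it may internally
reassign its drivers afterwards. If player `i` misreports `r`, the principal chooses
`â = choice (update θ i r)` (minimizing the reported social cost) and charges
`p̂ = h₋ᵢ - ∑_{j≠i} V j (θ j) â`; player `i` may then replace `â` by any allocation `â'`
agreeing with `â` on the other players, obtaining payoff `V i (θ i) â' - p̂`.  The payoff
`∑_j V j (θ j) (choice θ) - h₋ᵢ` from truthful reporting with the prescribed assignment is
no larger. -/
theorem vcg_no_lie_with_internal_reassignment {N A Θ : Type*} [Fintype N] [DecidableEq N]
    [Fintype A] [Nonempty A]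
    (V : N → Θ → A → ℝ) (choice : (N → Θ) → A)
    (hchoice : ∀ (θhat : N → Θ) (b : A),
      ∑ i, V i (θhat i) (choice θhat) ≤ ∑ i, V i (θhat i) b)
    (θ : N → Θ) (i : N) (r : Θ) (a' : A)
    (hagree : ∀ j, j ≠ i →
      V j (θ j) a' = V j (θ j) (choice (Function.update θ i r))) :
    ∑ j, V j (θ j) (choice θ)
        - (Finset.univ.inf' Finset.univ_nonempty
            fun b : A => ∑ j ∈ Finset.univ.erase i, V j (θ j) b)
      ≤ V i (θ i) a'
        - ((Finset.univ.inf' Finset.univ_nonempty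
              fun b : A => ∑ j ∈ Finset.univ.erase i, V j (θ j) b)
            - ∑ j ∈ Finset.univ.erase i,
                V j (θ j) (choice (Function.update θ i r))) := by
  have h := hchoice θ a'
  have hsum : ∑ j ∈ Finset.univ.erase i, V j (θ j) (choice (Function.update θ i r))
      = ∑ j ∈ Finset.univ.erase i, V j (θ j) a' :=
    Finset.sum_congr rfl fun j hj => (hagree j (Finset.ne_of_mem_erase hj)).symm
  have hsplit : V i (θ i) a' + ∑ j ∈ Finset.univ.erase i, V j (θ j) a'
      = ∑ j, V j (θ j) a' := Finset.add_sum_erase _ (fun j => V j (θ j) a') (Finset.mem_univ i)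
  linarith
end

section
/- In the FCSA game, the social cost of any strategy profile is bounded below by the social optimum obtained from the conflict-free assignment LP, and the socially optimal strategy profile assigns at most max(0, |D| − |V|) drivers to the artificial station v0. -/
open Finset

/-- FCSA social cost of an assignment `f` of drivers to stations (`none` = artificial
station `v₀`): each driver pays its driving time (or `β` at `v₀`), and each real station
with `m ≥ 1` assigned drivers incurs an extra penalty `(m - 1) * β`. -/
noncomputable def socialCost {D V : Type*} [Fintype D] [Fintype V] [DecidableEq V]
    (t : D → V → ℝ) (β : ℝ) (f : D → Option V) : ℝ :=
  (∑ k, (f k).elim β (fun v => t k v)) +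
    ∑ v, (((Finset.univ.filter fun k => f k = some v).card - 1 : ℕ) : ℝ) * β

section Aux

variable {D V : Type*} [Fintype D] [Fintype V] [DecidableEq D] [DecidableEq V]

private lemma filter_update_ne (f : D → Option V) (k : D) (a : Option V) (w : V)
    (ha : a ≠ some w) :
    (Finset.univ.filter fun j => Function.update f k a j = some w)
      = (Finset.univ.filter fun j => f j = some w).erase k := by
  ext j
  simp only [mem_filter, mem_univ, true_and, mem_erase, Function.update_apply]
  by_cases h : j = k <;> simp [h, ha, and_comm]

private lemma filter_update_eq (f : D → Option V) (k : D) (w : V) :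
    (Finset.univ.filter fun j => Function.update f k (some w) j = some w)
      = insert k ((Finset.univ.filter fun j => f j = some w).erase k) := by
  ext j
  simp only [mem_filter, mem_univ, true_and, mem_insert, mem_erase, Function.update_apply]
  by_cases h : j = k <;> simp [h]

private lemma driver_sum_update (t : D → V → ℝ) (β : ℝ) (f : D → Option V) (k : D)
    (a : Option V) :
    ∑ j, (Function.update f k a j).elim β (fun v => t j v)
      = a.elim β (fun v => t k v) - (f k).elim β (fun v => t k v)
        + ∑ j, (f j).elim β (fun v => t j v) := by
  rw [← Finset.add_sum_erase Finset.univ (fun j => (Function.update f k a j).elim β _)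
        (Finset.mem_univ k),
      ← Finset.add_sum_erase Finset.univ (fun j => (f j).elim β _) (Finset.mem_univ k)]
  have : ∑ j ∈ Finset.univ.erase k, (Function.update f k a j).elim β (fun v => t j v)
      = ∑ j ∈ Finset.univ.erase k, (f j).elim β (fun v => t j v) := by
    refine Finset.sum_congr rfl fun j hj => ?_
    rw [Function.update_apply, if_neg (Finset.mem_erase.mp hj).1]
  rw [Function.update_self, this]
  ring

/-- Moving a conflicting driver decreases the conflict measure without increasing cost. -/
private lemma step (t : D → V → ℝ) (β : ℝ) (ht : ∀ k v, 0 ≤ t k v)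
    (htβ : ∀ k v, t k v < β) (f : D → Option V) (v : V)
    (h2 : 2 ≤ (Finset.univ.filter fun k => f k = some v).card) :
    ∃ g : D → Option V,
      (∑ w, ((Finset.univ.filter fun k => g k = some w).card - 1)
        < ∑ w, ((Finset.univ.filter fun k => f k = some w).card - 1)) ∧
      socialCost t β g ≤ socialCost t β f := by
  obtain ⟨k, hk⟩ := Finset.card_pos.mp (by omega :
    0 < (Finset.univ.filter fun k => f k = some v).card)
  have hkv : f k = some v := (Finset.mem_filter.mp hk).2
  have hβ0 : 0 < β := lt_of_le_of_lt (ht k v) (htβ k v)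
  -- target of the move
  by_cases hempty : ∃ v' : V, (Finset.univ.filter fun j => f j = some v') = ∅
  · obtain ⟨v', hv'⟩ := hempty
    have hvv' : v' ≠ v := by
      intro h; rw [h] at hv'; rw [hv'] at h2; simp at h2
    refine ⟨Function.update f k (some v'), ?_, ?_⟩
    · -- measure decreases
      have hcard : ∀ w, w ≠ v' →
          (Finset.univ.filter fun j => Function.update f k (some v') j = some w)
            = (Finset.univ.filter fun j => f j = some w).erase k := by
        intro w hw
        exact filter_update_ne f k _ w (by simp [Ne.symm hw])
      have hv'new : (Finset.univ.filter fun j => Function.update f k (some v') j = some v')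
          = {k} := by
        rw [filter_update_eq, hv']; simp
      have hdec : (Finset.univ.filter fun j => Function.update f k (some v') j = some v).card
          = (Finset.univ.filter fun j => f j = some v).card - 1 := by
        rw [hcard v hvv'.symm, Finset.card_erase_of_mem hk]
      have hsame : ∀ w, w ≠ v → w ≠ v' →
          (Finset.univ.filter fun j => Function.update f k (some v') j = some w).card
            = (Finset.univ.filter fun j => f j = some w).card := by
        intro w hw hw'
        rw [hcard w hw', Finset.erase_eq_of_notMem]
        simp [hkv, Ne.symm hw]
      have hvnot : v ∈ Finset.univ.erase v' := by simp [hvv'.symm]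
      rw [← Finset.add_sum_erase Finset.univ
            (fun w => ((Finset.univ.filter fun j =>
              Function.update f k (some v') j = some w).card - 1)) (Finset.mem_univ v'),
          ← Finset.add_sum_erase Finset.univ
            (fun w => ((Finset.univ.filter fun j => f j = some w).card - 1))
            (Finset.mem_univ v'),
          ← Finset.add_sum_erase _
            (fun w => ((Finset.univ.filter fun j =>
              Function.update f k (some v') j = some w).card - 1)) hvnot,
          ← Finset.add_sum_erase _
            (fun w => ((Finset.univ.filter fun j => f j = some w).card - 1)) hvnot]
      have heq : ∑ w ∈ (Finset.univ.erase v').erase v,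
            ((Finset.univ.filter fun j => Function.update f k (some v') j = some w).card - 1)
          = ∑ w ∈ (Finset.univ.erase v').erase v,
            ((Finset.univ.filter fun j => f j = some w).card - 1) := by
        refine Finset.sum_congr rfl fun w hw => ?_
        have hw1 := (Finset.mem_erase.mp hw).1
        have hw2 := (Finset.mem_erase.mp (Finset.mem_erase.mp hw).2).1
        rw [hsame w hw1 hw2]
      rw [heq, hv'new, hv', hdec]
      simp only [Finset.card_singleton, Finset.card_empty]
      omega
    · -- cost does not increase
      unfold socialCost
      rw [driver_sum_update]
      have hcard : ∀ w, w ≠ v' →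
          (Finset.univ.filter fun j => Function.update f k (some v') j = some w)
            = (Finset.univ.filter fun j => f j = some w).erase k :=
        fun w hw => filter_update_ne f k _ w (by simp [Ne.symm hw])
      have hv'new : (Finset.univ.filter fun j => Function.update f k (some v') j = some v')
          = {k} := by rw [filter_update_eq, hv']; simp
      have hpen : ∑ w, (((Finset.univ.filter fun j =>
            Function.update f k (some v') j = some w).card - 1 : ℕ) : ℝ) * β
          = (∑ w, (((Finset.univ.filter fun j => f j = some w).card - 1 : ℕ) : ℝ) * β) - β := by
        have hvnot : v ∈ Finset.univ.erase v' := by simp [hvv'.symm]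
        rw [← Finset.add_sum_erase Finset.univ
              (fun w => (((Finset.univ.filter fun j =>
                Function.update f k (some v') j = some w).card - 1 : ℕ) : ℝ) * β)
              (Finset.mem_univ v'),
            ← Finset.add_sum_erase Finset.univ
              (fun w => (((Finset.univ.filter fun j => f j = some w).card - 1 : ℕ) : ℝ) * β)
              (Finset.mem_univ v'),
            ← Finset.add_sum_erase _
              (fun w => (((Finset.univ.filter fun j =>
                Function.update f k (some v') j = some w).card - 1 : ℕ) : ℝ) * β) hvnot,
            ← Finset.add_sum_erase _
              (fun w => (((Finset.univ.filter fun j => f j = some w).card - 1 : ℕ) : ℝ) * β)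
              hvnot]
        have heq : ∑ w ∈ (Finset.univ.erase v').erase v,
              (((Finset.univ.filter fun j =>
                Function.update f k (some v') j = some w).card - 1 : ℕ) : ℝ) * β
            = ∑ w ∈ (Finset.univ.erase v').erase v,
              (((Finset.univ.filter fun j => f j = some w).card - 1 : ℕ) : ℝ) * β := by
          refine Finset.sum_congr rfl fun w hw => ?_
          have hw1 := (Finset.mem_erase.mp hw).1
          have hw2 := (Finset.mem_erase.mp (Finset.mem_erase.mp hw).2).1
          rw [hcard w hw2, Finset.erase_eq_of_notMem (by simp [hkv, Ne.symm hw1])]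
        have hdec : (Finset.univ.filter fun j => Function.update f k (some v') j = some v).card
            = (Finset.univ.filter fun j => f j = some v).card - 1 := by
          rw [hcard v hvv'.symm, Finset.card_erase_of_mem hk]
        rw [heq, hv'new, hv', hdec]
        simp only [Finset.card_singleton, Finset.card_empty]
        have : ((((Finset.univ.filter fun j => f j = some v).card - 1) - 1 : ℕ) : ℝ)
            = (((Finset.univ.filter fun j => f j = some v).card - 1 : ℕ) : ℝ) - 1 := by
          have h1 : 1 ≤ (Finset.univ.filter fun j => f j = some v).card - 1 := by omega
          push_cast [Nat.cast_sub h1]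
          ring
        rw [this]
        ring
      rw [hpen, hkv]
      simp only [Option.elim]
      have := htβ k v'
      have := ht k v
      linarith
  · -- no empty station: move k to the artificial station
    push_neg at hempty
    refine ⟨Function.update f k none, ?_, ?_⟩
    · have hcard : ∀ w,
          (Finset.univ.filter fun j => Function.update f k none j = some w)
            = (Finset.univ.filter fun j => f j = some w).erase k :=
        fun w => filter_update_ne f k none w (by simp)
      have hdec : (Finset.univ.filter fun j => Function.update f k none j = some v).card
          = (Finset.univ.filter fun j => f j = some v).card - 1 := by
        rw [hcard v, Finset.card_erase_of_mem hk]
      have hsame : ∀ w, w ≠ v →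
          (Finset.univ.filter fun j => Function.update f k none j = some w).card
            = (Finset.univ.filter fun j => f j = some w).card := by
        intro w hw
        rw [hcard w, Finset.erase_eq_of_notMem (by simp [hkv, Ne.symm hw])]
      rw [← Finset.add_sum_erase Finset.univ
            (fun w => ((Finset.univ.filter fun j =>
              Function.update f k none j = some w).card - 1)) (Finset.mem_univ v),
          ← Finset.add_sum_erase Finset.univ
            (fun w => ((Finset.univ.filter fun j => f j = some w).card - 1))
            (Finset.mem_univ v)]
      have heq : ∑ w ∈ Finset.univ.erase v,
            ((Finset.univ.filter fun j => Function.update f k none j = some w).card - 1)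
          = ∑ w ∈ Finset.univ.erase v,
            ((Finset.univ.filter fun j => f j = some w).card - 1) := by
        refine Finset.sum_congr rfl fun w hw => ?_
        rw [hsame w (Finset.mem_erase.mp hw).1]
      rw [heq, hdec]
      omega
    · unfold socialCost
      rw [driver_sum_update]
      have hcard : ∀ w,
          (Finset.univ.filter fun j => Function.update f k none j = some w)
            = (Finset.univ.filter fun j => f j = some w).erase k :=
        fun w => filter_update_ne f k none w (by simp)
      have hpen : ∑ w, (((Finset.univ.filter fun j =>
            Function.update f k none j = some w).card - 1 : ℕ) : ℝ) * β
          = (∑ w, (((Finset.univ.filter fun j => f j = some w).card - 1 : ℕ) : ℝ) * β) - β := by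
        rw [← Finset.add_sum_erase Finset.univ
              (fun w => (((Finset.univ.filter fun j =>
                Function.update f k none j = some w).card - 1 : ℕ) : ℝ) * β)
              (Finset.mem_univ v),
            ← Finset.add_sum_erase Finset.univ
              (fun w => (((Finset.univ.filter fun j => f j = some w).card - 1 : ℕ) : ℝ) * β)
              (Finset.mem_univ v)]
        have heq : ∑ w ∈ Finset.univ.erase v,
              (((Finset.univ.filter fun j =>
                Function.update f k none j = some w).card - 1 : ℕ) : ℝ) * β
            = ∑ w ∈ Finset.univ.erase v,
              (((Finset.univ.filter fun j => f j = some w).card - 1 : ℕ) : ℝ) * β := by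
          refine Finset.sum_congr rfl fun w hw => ?_
          rw [hcard w, Finset.erase_eq_of_notMem
            (by simp [hkv, Ne.symm (Finset.mem_erase.mp hw).1])]
        have hdec : (Finset.univ.filter fun j => Function.update f k none j = some v).card
            = (Finset.univ.filter fun j => f j = some v).card - 1 := by
          rw [hcard v, Finset.card_erase_of_mem hk]
        rw [heq, hdec]
        have : ((((Finset.univ.filter fun j => f j = some v).card - 1) - 1 : ℕ) : ℝ)
            = (((Finset.univ.filter fun j => f j = some v).card - 1 : ℕ) : ℝ) - 1 := by
          have h1 : 1 ≤ (Finset.univ.filter fun j => f j = some v).card - 1 := by omega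
          push_cast [Nat.cast_sub h1]
          ring
        rw [this]
        ring
      rw [hpen, hkv]
      simp only [Option.elim]
      have := ht k v
      linarith

private lemma part1 (t : D → V → ℝ) (β : ℝ) (ht : ∀ k v, 0 ≤ t k v)
    (htβ : ∀ k v, t k v < β) :
    ∀ n (f : D → Option V),
      (∑ w, ((Finset.univ.filter fun k => f k = some w).card - 1)) = n →
      ∃ f' : D → Option V,
        (∀ k k', f' k = f' k' → f' k ≠ none → k = k') ∧
        socialCost t β f' ≤ socialCost t β f := by
  intro n
  induction n using Nat.strong_induction_on with
  | _ n ih =>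
    intro f hf
    by_cases h0 : n = 0
    · refine ⟨f, ?_, le_refl _⟩
      intro k k' hkk' hne
      obtain ⟨v, hv⟩ := Option.ne_none_iff_exists'.mp hne
      have hv' : f k' = some v := hkk' ▸ hv
      have hle : (Finset.univ.filter fun j => f j = some v).card ≤ 1 := by
        subst h0
        have := Finset.sum_eq_zero_iff.mp hf v (Finset.mem_univ v)
        omega
      have hk : k ∈ Finset.univ.filter fun j => f j = some v := by simp [hv]
      have hk' : k' ∈ Finset.univ.filter fun j => f j = some v := by simp [hv']
      exact Finset.card_le_one.mp hle k hk k' hk'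
    · have : ∃ v, 2 ≤ (Finset.univ.filter fun k => f k = some v).card := by
        by_contra hc
        push_neg at hc
        apply h0
        rw [← hf]
        refine Finset.sum_eq_zero fun v _ => ?_
        have := hc v
        omega
      obtain ⟨v, hv⟩ := this
      obtain ⟨g, hg1, hg2⟩ := step t β ht htβ f v hv
      obtain ⟨f', hf'1, hf'2⟩ := ih _ (hf ▸ hg1) g rfl
      exact ⟨f', hf'1, le_trans hf'2 hg2⟩

end Aux

/-- The social cost of any strategy profile is bounded below by the optimum over
conflict-free assignments (no real station used twice), and any social-cost-minimizing
profile assigns at most `max (0, |D| - |V|)` drivers (truncated ℕ-subtraction) to the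
artificial station `v₀`. Travel times are non-negative and below the penalty `β`. -/
theorem fcsa_conflict_free_bound_and_v0_count {D V : Type*} [Fintype D] [Fintype V]
    [DecidableEq D] [DecidableEq V]
    (t : D → V → ℝ) (β : ℝ)
    (ht : ∀ k v, 0 ≤ t k v) (htβ : ∀ k v, t k v < β) :
    (∀ f : D → Option V, ∃ f' : D → Option V,
        (∀ k k', f' k = f' k' → f' k ≠ none → k = k') ∧
        socialCost t β f' ≤ socialCost t β f)
    ∧ (∀ f : D → Option V,
        (∀ f'' : D → Option V, socialCost t β f ≤ socialCost t β f'') →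
        (Finset.univ.filter fun k => f k = none).card
          ≤ Fintype.card D - Fintype.card V) := by
  constructor
  · intro f
    exact part1 t β ht htβ _ f rfl
  · intro f hopt
    by_cases hnone : ∃ k, f k = none
    · obtain ⟨k, hk⟩ := hnone
      -- every station must be used
      have hused : ∀ v : V, (Finset.univ.filter fun j => f j = some v).Nonempty := by
        intro v
        by_contra hc
        rw [Finset.not_nonempty_iff_eq_empty] at hc
        -- move k onto v: cost strictly decreases, contradiction
        have hlt : socialCost t β (Function.update f k (some v)) < socialCost t β f := by
          unfold socialCost
          rw [driver_sum_update]
          have hpen : ∑ w, (((Finset.univ.filter fun j =>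
                Function.update f k (some v) j = some w).card - 1 : ℕ) : ℝ) * β
              = ∑ w, (((Finset.univ.filter fun j => f j = some w).card - 1 : ℕ) : ℝ) * β := by
            refine Finset.sum_congr rfl fun w _ => ?_
            by_cases hw : w = v
            · subst hw
              rw [filter_update_eq, hc]
              simp
            · rw [filter_update_ne f k _ w (by simp [Ne.symm hw]),
                Finset.erase_eq_of_notMem (by simp [hk])]
          rw [hpen, hk]
          simp only [Option.elim]
          have := htβ k v
          linarith
        exact absurd (hopt (Function.update f k (some v))) (not_le.mpr hlt)
      -- pick a driver at each station: injective
      choose φ hφ using fun v => (hused v)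
      have hφ' : ∀ v, f (φ v) = some v := fun v => (Finset.mem_filter.mp (hφ v)).2
      have hinj : Set.InjOn φ (Finset.univ : Finset V) := by
        intro a _ b _ hab
        have : some a = some b := by rw [← hφ' a, ← hφ' b, hab]
        exact Option.some_injective _ this
      have hcard : Fintype.card V ≤ (Finset.univ.filter fun j => ¬ f j = none).card := by
        refine Finset.card_le_card_of_injOn φ (fun v _ => ?_) hinj
        simp [hφ' v]
      have hsplit := Finset.card_filter_add_card_filter_not
        (s := (Finset.univ : Finset D)) (fun j => f j = none)
      rw [Finset.card_univ] at hsplit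
      omega
    · push_neg at hnone
      have : (Finset.univ.filter fun k => f k = none) = ∅ := by
        rw [Finset.filter_eq_empty_iff]
        intro k _
        exact hnone k
      simp [this]
end
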